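/- arXiv:2207.05379 — 4 statements merged into one kernel-verified Lean document; each statement's English description precedes it below -/
import Mathlib

section
/- If φ solves the system of three PDEs φ_tt − φψ_t² = −φ(S φ^{−γ}φ_s^{−γ})_s − (A²/(2φ))(φ²ψ_s²/φ_s²)_s − (A²φ/2)(χ_s²/(φ²φ_s²))_s, (φψ_t)_t + φ_tψ_t = (A²/φ)(φψ_s/φ_s)_s, χ_tt = A²(χ_s/(φφ_s))_s, with S constant, then D_t(φ_tφ_s + φ²ψ_tψ_s + χ_tχ_s) + D_s( −½(φ_t² + φ²ψ_t² + χ_t²) + γS/(γ−1) φ^{1−γ}φ_s^{1−γ} ) = 0. -/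
/-- Partial derivative in Lagrangian time t. -/
noncomputable def pdt (f : ℝ → ℝ → ℝ) (t s : ℝ) : ℝ := deriv (fun τ => f τ s) t

/-- Partial derivative in the mass Lagrangian coordinate s. -/
noncomputable def pds (f : ℝ → ℝ → ℝ) (t s : ℝ) : ℝ := deriv (fun x => f t x) s

section helpers
variable {g : ℝ → ℝ → ℝ}

lemma hd_t (hg : ContDiff ℝ (⊤ : ℕ∞) (Function.uncurry g)) (t s : ℝ) :
    HasDerivAt (fun τ => g τ s) (pdt g t s) t := by
  have h : DifferentiableAt ℝ (fun τ => g τ s) t :=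
    ((hg.differentiable (by simp)).comp (differentiable_id.prodMk (differentiable_const s))).differentiableAt
  exact h.hasDerivAt

lemma hd_s (hg : ContDiff ℝ (⊤ : ℕ∞) (Function.uncurry g)) (t s : ℝ) :
    HasDerivAt (fun x => g t x) (pds g t s) s := by
  have h : DifferentiableAt ℝ (fun x => g t x) s :=
    ((hg.differentiable (by simp)).comp ((differentiable_const t).prodMk differentiable_id)).differentiableAt
  exact h.hasDerivAt

lemma pdt_eq_fderiv (hg : ContDiff ℝ (⊤ : ℕ∞) (Function.uncurry g)) (t s : ℝ) :
    pdt g t s = fderiv ℝ (Function.uncurry g) (t, s) (1, 0) := by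
  have h : HasDerivAt (fun τ => g τ s)
      (fderiv ℝ (Function.uncurry g) (t, s) (1, 0)) t := by
    have h1 : HasFDerivAt (Function.uncurry g)
        (fderiv ℝ (Function.uncurry g) (t, s)) (t, s) :=
      (hg.differentiable (by simp) (t, s)).hasFDerivAt
    have h2 : HasDerivAt (fun τ : ℝ => (τ, s)) ((1 : ℝ), (0 : ℝ)) t :=
      HasDerivAt.prodMk (hasDerivAt_id t) (hasDerivAt_const t s)
    exact h1.comp_hasDerivAt t h2
  exact h.deriv

lemma pds_eq_fderiv (hg : ContDiff ℝ (⊤ : ℕ∞) (Function.uncurry g)) (t s : ℝ) :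
    pds g t s = fderiv ℝ (Function.uncurry g) (t, s) (0, 1) := by
  have h : HasDerivAt (fun x => g t x)
      (fderiv ℝ (Function.uncurry g) (t, s) (0, 1)) s := by
    have h1 : HasFDerivAt (Function.uncurry g)
        (fderiv ℝ (Function.uncurry g) (t, s)) (t, s) :=
      (hg.differentiable (by simp) (t, s)).hasFDerivAt
    have h2 : HasDerivAt (fun x : ℝ => (t, x)) ((0 : ℝ), (1 : ℝ)) s :=
      HasDerivAt.prodMk (hasDerivAt_const s t) (hasDerivAt_id s)
    exact h1.comp_hasDerivAt s h2
  exact h.deriv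

lemma smooth_pdt (hg : ContDiff ℝ (⊤ : ℕ∞) (Function.uncurry g)) :
    ContDiff ℝ (⊤ : ℕ∞) (Function.uncurry (pdt g)) := by
  have h : Function.uncurry (pdt g)
      = fun p : ℝ × ℝ => fderiv ℝ (Function.uncurry g) p (1, 0) := by
    funext p
    simpa [Function.uncurry] using pdt_eq_fderiv hg p.1 p.2
  rw [h]
  exact (hg.fderiv_right (by simp)).clm_apply contDiff_const

lemma smooth_pds (hg : ContDiff ℝ (⊤ : ℕ∞) (Function.uncurry g)) :
    ContDiff ℝ (⊤ : ℕ∞) (Function.uncurry (pds g)) := by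
  have h : Function.uncurry (pds g)
      = fun p : ℝ × ℝ => fderiv ℝ (Function.uncurry g) p (0, 1) := by
    funext p
    simpa [Function.uncurry] using pds_eq_fderiv hg p.1 p.2
  rw [h]
  exact (hg.fderiv_right (by simp)).clm_apply contDiff_const

lemma clairaut (hg : ContDiff ℝ (⊤ : ℕ∞) (Function.uncurry g)) (t s : ℝ) :
    pdt (pds g) t s = pds (pdt g) t s := by
  set F := Function.uncurry g with hF
  have hdF : ∀ p, HasFDerivAt F (fderiv ℝ F p) p :=
    fun p => (hg.differentiable (by simp) p).hasFDerivAt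
  have hdF2 : HasFDerivAt (fderiv ℝ F) (fderiv ℝ (fderiv ℝ F) (t, s)) (t, s) :=
    (((hg.fderiv_right (m := 1) (by exact WithTop.coe_le_coe.mpr le_top)).differentiable one_ne_zero) (t, s)).hasFDerivAt
  set f'' := fderiv ℝ (fderiv ℝ F) (t, s) with hf''
  have hsymm := second_derivative_symmetric hdF hdF2 ((1:ℝ), (0:ℝ)) ((0:ℝ), (1:ℝ))
  have h1 : pdt (pds g) t s = f'' (1, 0) (0, 1) := by
    have hcomp : HasDerivAt (fun τ : ℝ => fderiv ℝ F (τ, s)) (f'' (1, 0)) t := by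
      have h2 : HasDerivAt (fun τ : ℝ => (τ, s)) ((1 : ℝ), (0 : ℝ)) t :=
        HasDerivAt.prodMk (hasDerivAt_id t) (hasDerivAt_const t s)
      exact hdF2.comp_hasDerivAt t h2
    have happ : HasDerivAt (fun τ : ℝ => fderiv ℝ F (τ, s) (0, 1))
        (f'' (1, 0) (0, 1)) t := by
      have := hcomp.clm_apply (hasDerivAt_const t ((0:ℝ), (1:ℝ)))
      simpa using this
    have heqfun : (fun τ : ℝ => pds g τ s) = fun τ : ℝ => fderiv ℝ F (τ, s) (0, 1) := by
      funext τ; exact pds_eq_fderiv hg τ s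
    show deriv (fun τ => pds g τ s) t = _
    rw [heqfun]
    exact happ.deriv
  have h2 : pds (pdt g) t s = f'' (0, 1) (1, 0) := by
    have hcomp : HasDerivAt (fun x : ℝ => fderiv ℝ F (t, x)) (f'' (0, 1)) s := by
      have h2 : HasDerivAt (fun x : ℝ => (t, x)) ((0 : ℝ), (1 : ℝ)) s :=
        HasDerivAt.prodMk (hasDerivAt_const s t) (hasDerivAt_id s)
      exact hdF2.comp_hasDerivAt s h2
    have happ : HasDerivAt (fun x : ℝ => fderiv ℝ F (t, x) (1, 0))
        (f'' (0, 1) (1, 0)) s := by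
      have := hcomp.clm_apply (hasDerivAt_const s ((1:ℝ), (0:ℝ)))
      simpa using this
    have heqfun : (fun x : ℝ => pdt g t x) = fun x : ℝ => fderiv ℝ F (t, x) (1, 0) := by
      funext x; exact pdt_eq_fderiv hg t x
    show deriv (fun x => pdt g t x) s = _
    rw [heqfun]
    exact happ.deriv
  rw [h1, h2, hsymm]

end helpers

/-- Conservation law corresponding to s-translation invariance for constant entropy:
on solutions of the variational cylindrical MHD system,
D_t(φ_tφ_s + φ²ψ_tψ_s + χ_tχ_s)
+ D_s(−½(φ_t² + φ²ψ_t² + χ_t²) + γS/(γ−1)·φ^{1−γ}φ_s^{1−γ}) = 0. -/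
theorem stmt_11 (A γ S₀ : ℝ) (hA : A ≠ 0) (hγ : 1 < γ) (hS : S₀ ≠ 0)
    (φ ψ χ : ℝ → ℝ → ℝ)
    (hφ : ContDiff ℝ (⊤ : ℕ∞) (Function.uncurry φ))
    (hψ : ContDiff ℝ (⊤ : ℕ∞) (Function.uncurry ψ))
    (hχ : ContDiff ℝ (⊤ : ℕ∞) (Function.uncurry χ))
    (hpos : ∀ t s, 0 < φ t s) (hspos : ∀ t s, 0 < pds φ t s)
    (heq1 : ∀ t s, pdt (fun t s => pdt φ t s) t s - φ t s * (pdt ψ t s)^2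
      = - φ t s * pds (fun t s => S₀ * (φ t s) ^ (-γ) * (pds φ t s) ^ (-γ)) t s
        - A^2 / (2 * φ t s) *
            pds (fun t s => (φ t s)^2 * (pds ψ t s)^2 / (pds φ t s)^2) t s
        - A^2 * φ t s / 2 *
            pds (fun t s => (pds χ t s)^2 / ((φ t s)^2 * (pds φ t s)^2)) t s)
    (heq2 : ∀ t s, pdt (fun t s => φ t s * pdt ψ t s) t s + pdt φ t s * pdt ψ t s
      = A^2 / φ t s * pds (fun t s => φ t s * pds ψ t s / pds φ t s) t s)
    (heq3 : ∀ t s, pdt (fun t s => pdt χ t s) t s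
      = A^2 * pds (fun t s => pds χ t s / (φ t s * pds φ t s)) t s) :
    ∀ t s,
      pdt (fun t s => pdt φ t s * pds φ t s
          + (φ t s)^2 * pdt ψ t s * pds ψ t s + pdt χ t s * pds χ t s) t s
      + pds (fun t s =>
          -(1/2) * ((pdt φ t s)^2 + (φ t s)^2 * (pdt ψ t s)^2 + (pdt χ t s)^2)
          + γ * S₀ / (γ - 1) * (φ t s) ^ ((1:ℝ) - γ) * (pds φ t s) ^ ((1:ℝ) - γ)) t s
      = 0 := by
  intro t s
  have e1 := heq1 t s
  have e2 := heq2 t s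
  have e3 := heq3 t s
  rw [show pdt (fun t s => pdt φ t s) t s = pdt (pdt φ) t s from rfl] at e1
  rw [show pdt (fun t s => pdt χ t s) t s = pdt (pdt χ) t s from rfl] at e3
  have hapos := hpos t s
  have haspos := hspos t s
  have ha : φ t s ≠ 0 := ne_of_gt hapos
  have has : pds φ t s ≠ 0 := ne_of_gt haspos
  have hγ1 : γ - 1 ≠ 0 := sub_ne_zero.mpr hγ.ne'
  -- first order derivative facts
  have Hφt := hd_t hφ t s
  have Hφs := hd_s hφ t s
  have Hψt := hd_t hψ t s
  have Hψs := hd_s hψ t s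
  have Hχt := hd_t hχ t s
  have Hχs := hd_s hχ t s
  -- second order facts
  have Hφtt := hd_t (smooth_pdt hφ) t s
  have Hφts := hd_s (smooth_pdt hφ) t s
  have Hφss := hd_s (smooth_pds hφ) t s
  have Hφst : HasDerivAt (fun τ => pds φ τ s) (pds (pdt φ) t s) t := by
    have h := hd_t (smooth_pds hφ) t s
    rwa [clairaut hφ t s] at h
  have Hψtt := hd_t (smooth_pdt hψ) t s
  have Hψts := hd_s (smooth_pdt hψ) t s
  have Hψss := hd_s (smooth_pds hψ) t s
  have Hψst : HasDerivAt (fun τ => pds ψ τ s) (pds (pdt ψ) t s) t := by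
    have h := hd_t (smooth_pds hψ) t s
    rwa [clairaut hψ t s] at h
  have Hχtt := hd_t (smooth_pdt hχ) t s
  have Hχts := hd_s (smooth_pdt hχ) t s
  have Hχss := hd_s (smooth_pds hχ) t s
  have Hχst : HasDerivAt (fun τ => pds χ τ s) (pds (pdt χ) t s) t := by
    have h := hd_t (smooth_pds hχ) t s
    rwa [clairaut hχ t s] at h
  -- short names
  set a := φ t s with hadef
  set a_t := pdt φ t s with hatdef
  set a_s := pds φ t s with hasdef
  set a_tt := pdt (pdt φ) t s with hattdef
  set a_ts := pds (pdt φ) t s with hatsdef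
  set a_ss := pds (pds φ) t s with hassdef
  set b_t := pdt ψ t s with hbtdef
  set b_s := pds ψ t s with hbsdef
  set b_tt := pdt (pdt ψ) t s with hbttdef
  set b_ts := pds (pdt ψ) t s with hbtsdef
  set b_ss := pds (pds ψ) t s with hbssdef
  set c_t := pdt χ t s with hctdef
  set c_s := pds χ t s with hcsdef
  set c_tt := pdt (pdt χ) t s with hcttdef
  set c_ts := pds (pdt χ) t s with hctsdef
  set c_ss := pds (pds χ) t s with hcssdef
  -- composite derivative computations
  have hE1 : pds (fun t s => S₀ * (φ t s) ^ (-γ) * (pds φ t s) ^ (-γ)) t s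
      = S₀ * -γ * (a ^ (-γ - 1)) * (a_s ^ (-γ)) * a_s
        + S₀ * -γ * (a ^ (-γ)) * (a_s ^ (-γ - 1)) * a_ss := by
    have h0 := ((Hφs.rpow_const (p := -γ) (Or.inl ha)).const_mul S₀).mul
      (Hφss.rpow_const (p := -γ) (Or.inl has))
    have h1 : pds (fun t s => S₀ * (φ t s) ^ (-γ) * (pds φ t s) ^ (-γ)) t s = _ := h0.deriv
    rw [h1]; try ring
  have hE2 : pds (fun t s => (φ t s)^2 * (pds ψ t s)^2 / (pds φ t s)^2) t s
      = ((2*a*a_s*b_s^2 + 2*a^2*b_s*b_ss) * a_s^2 - a^2*b_s^2*(2*a_s*a_ss)) / a_s^4 := by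
    have h0 := ((Hφs.pow 2).mul (Hψss.pow 2)).div (Hφss.pow 2) (pow_ne_zero 2 has)
    have h1 : pds (fun t s => (φ t s)^2 * (pds ψ t s)^2 / (pds φ t s)^2) t s = _ := h0.deriv
    rw [h1]; norm_num; try ring
  have hE3 : pds (fun t s => (pds χ t s)^2 / ((φ t s)^2 * (pds φ t s)^2)) t s
      = (2*c_s*c_ss*(a^2*a_s^2) - c_s^2*(2*a*a_s*a_s^2 + 2*a^2*a_s*a_ss)) / (a^2*a_s^2)^2 := by
    have h0 := (Hχss.pow 2).div ((Hφs.pow 2).mul (Hφss.pow 2))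
      (mul_ne_zero (pow_ne_zero 2 ha) (pow_ne_zero 2 has))
    have h1 : pds (fun t s => (pds χ t s)^2 / ((φ t s)^2 * (pds φ t s)^2)) t s = _ := h0.deriv
    rw [h1]; norm_num; try ring
  have hE4 : pds (fun t s => φ t s * pds ψ t s / pds φ t s) t s
      = ((a_s*b_s + a*b_ss)*a_s - a*b_s*a_ss)/a_s^2 := by
    have h0 := (Hφs.mul Hψss).div Hφss has
    have h1 : pds (fun t s => φ t s * pds ψ t s / pds φ t s) t s = _ := h0.deriv
    rw [h1]; simp only [Pi.mul_apply, ← hadef, ← hasdef, ← hbsdef]; try ring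
  have hE5 : pds (fun t s => pds χ t s / (φ t s * pds φ t s)) t s
      = (c_ss*(a*a_s) - c_s*(a_s*a_s + a*a_ss))/(a*a_s)^2 := by
    have h0 := Hχss.div (Hφs.mul Hφss) (mul_ne_zero ha has)
    have h1 : pds (fun t s => pds χ t s / (φ t s * pds φ t s)) t s = _ := h0.deriv
    rw [h1]; simp only [Pi.mul_apply, ← hadef, ← hasdef, ← hcsdef]; try ring
  have hE6 : pdt (fun t s => φ t s * pdt ψ t s) t s = a_t * b_t + a * b_tt := by
    have h0 := Hφt.mul Hψtt
    have h1 : pdt (fun t s => φ t s * pdt ψ t s) t s = _ := h0.deriv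
    rw [h1]
  have hT : pdt (fun t s => pdt φ t s * pds φ t s
        + (φ t s)^2 * pdt ψ t s * pds ψ t s + pdt χ t s * pds χ t s) t s
      = a_tt*a_s + a_t*a_ts + (2*a*a_t*b_t + a^2*b_tt)*b_s + a^2*b_t*b_ts
        + c_tt*c_s + c_t*c_ts := by
    have h0 := ((Hφtt.mul Hφst).add (((Hφt.pow 2).mul Hψtt).mul Hψst)).add (Hχtt.mul Hχst)
    have h1 : pdt (fun t s => pdt φ t s * pds φ t s
        + (φ t s)^2 * pdt ψ t s * pds ψ t s + pdt χ t s * pds χ t s) t s = _ := h0.deriv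
    rw [h1]; norm_num; try ring
  have hS : pds (fun t s =>
        -(1/2) * ((pdt φ t s)^2 + (φ t s)^2 * (pdt ψ t s)^2 + (pdt χ t s)^2)
        + γ * S₀ / (γ - 1) * (φ t s) ^ ((1:ℝ) - γ) * (pds φ t s) ^ ((1:ℝ) - γ)) t s
      = -(1/2)*(2*a_t*a_ts + 2*a*a_s*b_t^2 + 2*a^2*b_t*b_ts + 2*c_t*c_ts)
        + γ*S₀/(γ-1)*((1-γ) * (a ^ ((1:ℝ)-γ-1)) * a_s * (a_s ^ ((1:ℝ)-γ))
          + (a ^ ((1:ℝ)-γ)) * (1-γ) * (a_s ^ ((1:ℝ)-γ-1)) * a_ss) := by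
    have h0 := ((((Hφts.pow 2).add ((Hφs.pow 2).mul (Hψts.pow 2))).add (Hχts.pow 2)).const_mul
        (-(1/2) : ℝ)).add
      (((Hφs.rpow_const (p := (1:ℝ) - γ) (Or.inl ha)).const_mul (γ * S₀ / (γ - 1))).mul
        (Hφss.rpow_const (p := (1:ℝ) - γ) (Or.inl has)))
    have h1 : pds (fun t s =>
        -(1/2) * ((pdt φ t s)^2 + (φ t s)^2 * (pdt ψ t s)^2 + (pdt χ t s)^2)
        + γ * S₀ / (γ - 1) * (φ t s) ^ ((1:ℝ) - γ) * (pds φ t s) ^ ((1:ℝ) - γ)) t s = _ := h0.deriv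
    rw [h1]; norm_num; try ring
  rw [hE1, hE2, hE3] at e1
  rw [hE4, hE6] at e2
  rw [hE5] at e3
  rw [hT, hS]
  -- isolate second time derivatives
  have hbtt : b_tt = (A^2/a * (((a_s*b_s + a*b_ss)*a_s - a*b_s*a_ss)/a_s^2) - 2*(a_t*b_t))/a := by
    rw [eq_div_iff ha]; linear_combination e2
  have hatt : a_tt = a*b_t^2
      + (- a * (S₀ * -γ * (a ^ (-γ - 1)) * (a_s ^ (-γ)) * a_s
          + S₀ * -γ * (a ^ (-γ)) * (a_s ^ (-γ - 1)) * a_ss)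
        - A^2/(2*a) * (((2*a*a_s*b_s^2 + 2*a^2*b_s*b_ss) * a_s^2 - a^2*b_s^2*(2*a_s*a_ss)) / a_s^4)
        - A^2*a/2 * ((2*c_s*c_ss*(a^2*a_s^2) - c_s^2*(2*a*a_s*a_s^2 + 2*a^2*a_s*a_ss)) / (a^2*a_s^2)^2)) := by
    linear_combination e1
  rw [hatt, hbtt, e3]
  -- rpow bookkeeping
  have hw1 : a ^ (-γ) = (a ^ γ)⁻¹ := Real.rpow_neg hapos.le γ
  have hw2 : a_s ^ (-γ) = (a_s ^ γ)⁻¹ := Real.rpow_neg haspos.le γ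
  have hw3 : a ^ (-γ - 1) = (a ^ γ)⁻¹ * a⁻¹ := by
    rw [show -γ - 1 = -(γ + 1) by ring, Real.rpow_neg hapos.le, Real.rpow_add hapos,
      Real.rpow_one, mul_inv]
  have hw4 : a_s ^ (-γ - 1) = (a_s ^ γ)⁻¹ * a_s⁻¹ := by
    rw [show -γ - 1 = -(γ + 1) by ring, Real.rpow_neg haspos.le, Real.rpow_add haspos,
      Real.rpow_one, mul_inv]
  have hw5 : a ^ ((1:ℝ) - γ) = a * (a ^ γ)⁻¹ := by
    rw [show (1:ℝ) - γ = 1 + -γ by ring, Real.rpow_add hapos, Real.rpow_one,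
      Real.rpow_neg hapos.le]
  have hw6 : a_s ^ ((1:ℝ) - γ) = a_s * (a_s ^ γ)⁻¹ := by
    rw [show (1:ℝ) - γ = 1 + -γ by ring, Real.rpow_add haspos, Real.rpow_one,
      Real.rpow_neg haspos.le]
  have hw7 : a ^ ((1:ℝ) - γ - 1) = (a ^ γ)⁻¹ := by
    rw [show (1:ℝ) - γ - 1 = -γ by ring, Real.rpow_neg hapos.le]
  have hw8 : a_s ^ ((1:ℝ) - γ - 1) = (a_s ^ γ)⁻¹ := by
    rw [show (1:ℝ) - γ - 1 = -γ by ring, Real.rpow_neg haspos.le]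
  rw [hw3, hw4, hw1, hw2, hw5, hw6, hw7, hw8]
  have hW : a ^ γ ≠ 0 := (Real.rpow_pos_of_pos hapos γ).ne'
  have hV : a_s ^ γ ≠ 0 := (Real.rpow_pos_of_pos haspos γ).ne'
  field_simp
  ring
end

section
/- The PDE φ_tt − R²/φ³ = −φ(S φ^{−γ}φ_s^{−γ})_s − (1/(2φ))(F²φ²/φ_s²)_s − (φ/2)(G²/(φ²φ_s²))_s is the Euler–Lagrange equation of the Lagrangian L = ½φ_t² − ½R²/φ² − S/(γ−1) φ^{1−γ}φ_s^{1−γ} − F²φ/(2φ_s) − G²/(2φφ_s). -/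
/-- The PDE φ_tt − R²/φ³ = −φ(Sφ^{−γ}φ_s^{−γ})_s − (1/(2φ))(F²φ²/φ_s²)_s
− (φ/2)(G²/(φ²φ_s²))_s is the Euler–Lagrange equation of
L = ½φ_t² − ½R²/φ² − S/(γ−1)·φ^{1−γ}φ_s^{1−γ} − F²φ/(2φ_s) − G²/(2φφ_s):
the EL expression ∂L/∂φ − D_t(∂L/∂φ_t) − D_s(∂L/∂φ_s) equals
(PDE right-hand side) − (PDE left-hand side). -/
theorem stmt_12 (γ : ℝ) (hγ : 1 < γ) (S F G R : ℝ → ℝ)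
    (hS : ContDiff ℝ (⊤ : ℕ∞) S) (hF : ContDiff ℝ (⊤ : ℕ∞) F)
    (hG : ContDiff ℝ (⊤ : ℕ∞) G) (hR : ContDiff ℝ (⊤ : ℕ∞) R)
    (φ : ℝ → ℝ → ℝ)
    (hφ : ContDiff ℝ (⊤ : ℕ∞) (Function.uncurry φ))
    (hpos : ∀ t s, 0 < φ t s) (hspos : ∀ t s, 0 < pds φ t s) :
    ∀ t s : ℝ,
      deriv (fun x =>
          (1/2) * (pdt φ t s)^2 - (1/2) * (R s)^2 / x^2
          - S s / (γ - 1) * x ^ ((1:ℝ) - γ) * (pds φ t s) ^ ((1:ℝ) - γ)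
          - (F s)^2 * x / (2 * pds φ t s)
          - (G s)^2 / (2 * x * pds φ t s)) (φ t s)
      - pdt (fun t s => deriv (fun x =>
          (1/2) * x^2 - (1/2) * (R s)^2 / (φ t s)^2
          - S s / (γ - 1) * (φ t s) ^ ((1:ℝ) - γ) * (pds φ t s) ^ ((1:ℝ) - γ)
          - (F s)^2 * φ t s / (2 * pds φ t s)
          - (G s)^2 / (2 * φ t s * pds φ t s)) (pdt φ t s)) t s
      - pds (fun t s => deriv (fun x =>
          (1/2) * (pdt φ t s)^2 - (1/2) * (R s)^2 / (φ t s)^2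
          - S s / (γ - 1) * (φ t s) ^ ((1:ℝ) - γ) * x ^ ((1:ℝ) - γ)
          - (F s)^2 * φ t s / (2 * x)
          - (G s)^2 / (2 * φ t s * x)) (pds φ t s)) t s
      = (- φ t s * pds (fun t s => S s * (φ t s) ^ (-γ) * (pds φ t s) ^ (-γ)) t s
          - 1 / (2 * φ t s) *
              pds (fun t s => (F s)^2 * (φ t s)^2 / (pds φ t s)^2) t s
          - φ t s / 2 *
              pds (fun t s => (G s)^2 / ((φ t s)^2 * (pds φ t s)^2)) t s)
        - (pdt (fun t s => pdt φ t s) t s - (R s)^2 / (φ t s)^3) := by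
  have hslice : ∀ t : ℝ, ContDiff ℝ (⊤ : ℕ∞) (fun x => φ t x) := fun t =>
    (hφ.of_le (by simp)).comp (contDiff_const.prodMk contDiff_id)
  have hone : ((⊤ : ℕ∞) : WithTop ℕ∞) ≠ 0 := by simp
  have hqslice : ∀ t : ℝ, ContDiff ℝ (⊤ : ℕ∞) (fun x => pds φ t x) := fun t =>
    (contDiff_infty_iff_deriv.mp (hslice t)).2
  intro t s
  have hp : (0:ℝ) < φ t s := hpos t s
  have hq : (0:ℝ) < pds φ t s := hspos t s
  have hp0 : φ t s ≠ 0 := hp.ne'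
  have hq0 : pds φ t s ≠ 0 := hq.ne'
  have hγ0 : γ - 1 ≠ 0 := sub_ne_zero.mpr hγ.ne'
  -- Step 2: the middle EL term is just φ_tt
  have hF2 : (fun t s => deriv (fun x =>
          (1/2) * x^2 - (1/2) * (R s)^2 / (φ t s)^2
          - S s / (γ - 1) * (φ t s) ^ ((1:ℝ) - γ) * (pds φ t s) ^ ((1:ℝ) - γ)
          - (F s)^2 * φ t s / (2 * pds φ t s)
          - (G s)^2 / (2 * φ t s * pds φ t s)) (pdt φ t s))
      = fun t s => pdt φ t s := by
    funext τ σ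
    have big := (((((hasDerivAt_pow 2 (pdt φ τ σ)).const_mul ((1:ℝ)/2)).sub_const
        ((1/2) * (R σ)^2 / (φ τ σ)^2)).sub_const
        (S σ / (γ - 1) * (φ τ σ) ^ ((1:ℝ) - γ) * (pds φ τ σ) ^ ((1:ℝ) - γ))).sub_const
        ((F σ)^2 * φ τ σ / (2 * pds φ τ σ))).sub_const
        ((G σ)^2 / (2 * φ τ σ * pds φ τ σ))
    have e : deriv (fun x =>
          (1/2) * x^2 - (1/2) * (R σ)^2 / (φ τ σ)^2
          - S σ / (γ - 1) * (φ τ σ) ^ ((1:ℝ) - γ) * (pds φ τ σ) ^ ((1:ℝ) - γ)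
          - (F σ)^2 * φ τ σ / (2 * pds φ τ σ)
          - (G σ)^2 / (2 * φ τ σ * pds φ τ σ)) (pdt φ τ σ) = _ := big.deriv
    rw [e]; norm_num; ring
  -- Step 3: identify the conjugate-momentum function
  have hF3 : (fun t s => deriv (fun x =>
          (1/2) * (pdt φ t s)^2 - (1/2) * (R s)^2 / (φ t s)^2
          - S s / (γ - 1) * (φ t s) ^ ((1:ℝ) - γ) * x ^ ((1:ℝ) - γ)
          - (F s)^2 * φ t s / (2 * x)
          - (G s)^2 / (2 * φ t s * x)) (pds φ t s))
      = fun t s => φ t s * (S s * (φ t s) ^ (-γ) * (pds φ t s) ^ (-γ))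
          + (F s)^2 * (φ t s)^2 / (pds φ t s)^2 / (2 * φ t s)
          + φ t s / 2 * ((G s)^2 / ((φ t s)^2 * (pds φ t s)^2)) := by
    funext τ σ
    have hp' : (0:ℝ) < φ τ σ := hpos τ σ
    have hq' : (0:ℝ) < pds φ τ σ := hspos τ σ
    have big := ((((hasDerivAt_const (pds φ τ σ) ((1/2) * (pdt φ τ σ)^2)).sub
        (hasDerivAt_const (pds φ τ σ) ((1/2) * (R σ)^2 / (φ τ σ)^2))).sub
        ((Real.hasDerivAt_rpow_const (p := (1:ℝ) - γ) (Or.inl hq'.ne')).const_mul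
          (S σ / (γ - 1) * (φ τ σ) ^ ((1:ℝ) - γ)))).sub
        ((hasDerivAt_const (pds φ τ σ) ((F σ)^2 * φ τ σ)).div
          ((hasDerivAt_id (pds φ τ σ)).const_mul 2)
          (show (2:ℝ) * pds φ τ σ ≠ 0 by positivity))).sub
        ((hasDerivAt_const (pds φ τ σ) ((G σ)^2)).div
          ((hasDerivAt_id (pds φ τ σ)).const_mul (2 * φ τ σ))
          (show (2 * φ τ σ) * pds φ τ σ ≠ 0 by positivity))
    have e : deriv (fun x =>
          (1/2) * (pdt φ τ σ)^2 - (1/2) * (R σ)^2 / (φ τ σ)^2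
          - S σ / (γ - 1) * (φ τ σ) ^ ((1:ℝ) - γ) * x ^ ((1:ℝ) - γ)
          - (F σ)^2 * φ τ σ / (2 * x)
          - (G σ)^2 / (2 * φ τ σ * x)) (pds φ τ σ) = _ := big.deriv
    rw [e]
    simp only [show (1:ℝ) - γ - 1 = -γ by ring]
    simp only [show (1:ℝ) - γ = 1 + -γ by ring]
    simp only [Real.rpow_add hp', Real.rpow_add hq', Real.rpow_one, id]
    field_simp
    ring
  rw [hF2, hF3]
  -- Step 1: the ∂L/∂φ term
  have big1 := ((((hasDerivAt_const (φ t s) ((1/2) * (pdt φ t s)^2)).sub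
      ((hasDerivAt_const (φ t s) ((1/2) * (R s)^2)).div (hasDerivAt_pow 2 (φ t s))
        (pow_ne_zero 2 hp0))).sub
      (((Real.hasDerivAt_rpow_const (p := (1:ℝ) - γ) (Or.inl hp0)).const_mul
        (S s / (γ - 1))).mul_const ((pds φ t s) ^ ((1:ℝ) - γ)))).sub
      (((hasDerivAt_id (φ t s)).const_mul ((F s)^2)).div_const (2 * pds φ t s))).sub
      ((hasDerivAt_const (φ t s) ((G s)^2)).div
        (((hasDerivAt_id (φ t s)).const_mul 2).mul_const (pds φ t s))
        (show (2 * φ t s) * pds φ t s ≠ 0 by positivity))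
  have e1 : deriv (fun x =>
          (1/2) * (pdt φ t s)^2 - (1/2) * (R s)^2 / x^2
          - S s / (γ - 1) * x ^ ((1:ℝ) - γ) * (pds φ t s) ^ ((1:ℝ) - γ)
          - (F s)^2 * x / (2 * pds φ t s)
          - (G s)^2 / (2 * x * pds φ t s)) (φ t s) = _ := big1.deriv
  rw [e1]
  -- Step 4: expand the s-derivative of the momentum
  have dφ : DifferentiableAt ℝ (fun x => φ t x) s :=
    (hslice t).differentiable hone |>.differentiableAt
  have dq : DifferentiableAt ℝ (fun x => pds φ t x) s :=
    (hqslice t).differentiable hone |>.differentiableAt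
  have dS : DifferentiableAt ℝ S s := (hS.of_le (by simp)).differentiable hone |>.differentiableAt
  have dF : DifferentiableAt ℝ F s := (hF.of_le (by simp)).differentiable hone |>.differentiableAt
  have dG : DifferentiableAt ℝ G s := (hG.of_le (by simp)).differentiable hone |>.differentiableAt
  have hP : HasDerivAt (fun x => φ t x) (pds φ t s) s := dφ.hasDerivAt
  have hA : HasDerivAt (fun x => S x * (φ t x) ^ (-γ) * (pds φ t x) ^ (-γ))
      (pds (fun t s => S s * (φ t s) ^ (-γ) * (pds φ t s) ^ (-γ)) t s) s :=
    DifferentiableAt.hasDerivAt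
      ((dS.mul (dφ.rpow_const (Or.inl hp0))).mul (dq.rpow_const (Or.inl hq0)))
  have hB : HasDerivAt (fun x => (F x)^2 * (φ t x)^2 / (pds φ t x)^2)
      (pds (fun t s => (F s)^2 * (φ t s)^2 / (pds φ t s)^2) t s) s :=
    DifferentiableAt.hasDerivAt
      (((dF.pow 2).mul (dφ.pow 2)).div (dq.pow 2) (pow_ne_zero 2 hq0))
  have hC : HasDerivAt (fun x => (G x)^2 / ((φ t x)^2 * (pds φ t x)^2))
      (pds (fun t s => (G s)^2 / ((φ t s)^2 * (pds φ t s)^2)) t s) s :=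
    DifferentiableAt.hasDerivAt
      ((dG.pow 2).div ((dφ.pow 2).mul (dq.pow 2))
        (by positivity))
  have big3 := ((hP.mul hA).add
      (hB.div (hP.const_mul 2) (show (2:ℝ) * φ t s ≠ 0 by positivity))).add
      ((hP.div_const 2).mul hC)
  have e3 : pds (fun t s => φ t s * (S s * (φ t s) ^ (-γ) * (pds φ t s) ^ (-γ))
          + (F s)^2 * (φ t s)^2 / (pds φ t s)^2 / (2 * φ t s)
          + φ t s / 2 * ((G s)^2 / ((φ t s)^2 * (pds φ t s)^2))) t s = _ := big3.deriv
  rw [e3]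
  simp only [show (1:ℝ) - γ - 1 = -γ by ring]
  simp only [show (1:ℝ) - γ = 1 + -γ by ring]
  simp only [Real.rpow_add hp, Real.rpow_add hq, Real.rpow_one]
  norm_num
  field_simp
  ring
end

section
/- If S(s) = S₀ s^q with q ≠ 0 and S₀ ≠ 0, then the conditions (k₇s+k₂)S' = (−2k₆ + (1−γ)k₇ + 2γk₈)S and 2k₆ = k₇ + 2k₈ force k₂ = 0 and k₆ = (2γ+q−1)λ, k₇ = 2(γ−1)λ, k₈ = (γ+q)λ for some real λ. -/
/-- For S(s) = S₀ s^q (q ≠ 0, S₀ ≠ 0) the classification conditions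
(k₇s + k₂)S' = (−2k₆ + (1−γ)k₇ + 2γk₈)S and 2k₆ = k₇ + 2k₈ force k₂ = 0 and
(k₆, k₇, k₈) = λ·(2γ+q−1, 2(γ−1), γ+q) for some real λ. -/
theorem stmt_15 (γ q S₀ k₂ k₆ k₇ k₈ : ℝ) (hγ : 1 < γ) (hq : q ≠ 0) (hS : S₀ ≠ 0)
    (h2 : 2 * k₆ = k₇ + 2 * k₈)
    (h1 : ∀ s : ℝ, 0 < s →
      (k₇ * s + k₂) * (S₀ * q * s ^ (q - 1))
        = (-2 * k₆ + (1 - γ) * k₇ + 2 * γ * k₈) * (S₀ * s ^ q)) :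
    k₂ = 0 ∧ ∃ lam : ℝ, k₆ = (2 * γ + q - 1) * lam ∧ k₇ = 2 * (γ - 1) * lam ∧
      k₈ = (γ + q) * lam := by
  set C : ℝ := -2 * k₆ + (1 - γ) * k₇ + 2 * γ * k₈ with hC
  have e1 := h1 1 one_pos
  rw [Real.one_rpow, Real.one_rpow] at e1
  have e1' : (k₇ + k₂) * q = C := by
    apply mul_left_cancel₀ hS
    linear_combination e1
  have e2 := h1 2 two_pos
  have h2q : (2:ℝ) ^ q = (2:ℝ) ^ (q - 1) * 2 := by
    rw [← Real.rpow_add_one two_ne_zero (q-1)]; ring_nf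
  have ht : (0:ℝ) < (2:ℝ) ^ (q - 1) := Real.rpow_pos_of_pos two_pos _
  rw [h2q] at e2
  have e2' : (k₇ * 2 + k₂) * q = C * 2 := by
    apply mul_left_cancel₀ (mul_ne_zero hS (ne_of_gt ht))
    linear_combination e2
  have hk2 : k₂ = 0 := by
    have : k₂ * q = 0 := by linarith
    exact (mul_eq_zero.mp this).resolve_right hq
  subst hk2
  refine ⟨rfl, k₇ / (2 * (γ - 1)), ?_, ?_, ?_⟩
  · have hg : γ - 1 ≠ 0 := by linarith
    field_simp
    nlinarith [e1', h2]
  · have hg : γ - 1 ≠ 0 := by linarith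
    field_simp
  · have hg : γ - 1 ≠ 0 := by linarith
    field_simp
    nlinarith [e1', h2]
end

section
/- If ρ, r, u, H^z, E^θ, w, H^r are smooth and satisfy ρ_t = −ρ²(ru)_s, r_t = u, r_s = 1/(rρ), z_t = w, (H^z/ρ)_t = (rwH^r − rE^θ)_s, H^r = A/r with A constant, and the conductivity relation σE^θ = −rρH^z_s with σ = Cρ (C ≠ 0 constant), then D_t[ (2t − Cs)H^z/ρ − CrzH^r ] + D_s[ (2t − Cs)(rE^θ − rwH^r) − r²H^z ] = 0. -/
lemma Dt' (f : ℝ → ℝ → ℝ) (hf : ContDiff ℝ (⊤ : ℕ∞) (Function.uncurry f)) (t s : ℝ) :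
    HasDerivAt (fun τ => f τ s) (pdt f t s) t := by
  have h : Differentiable ℝ (fun τ => f τ s) :=
    (hf.differentiable (by simp)).comp (differentiable_id.prodMk (differentiable_const s))
  exact (h t).hasDerivAt

lemma Ds' (f : ℝ → ℝ → ℝ) (hf : ContDiff ℝ (⊤ : ℕ∞) (Function.uncurry f)) (t s : ℝ) :
    HasDerivAt (fun x => f t x) (pds f t s) s := by
  have h : Differentiable ℝ (fun x => f t x) :=
    (hf.differentiable (by simp)).comp ((differentiable_const t).prodMk differentiable_id)
  exact (h s).hasDerivAt

/-- Additional conservation law for conductivity σ = Cρ (C ≠ 0) with H^r = A/r: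
D_t[(2t − Cs)H^z/ρ − CrzH^r] + D_s[(2t − Cs)(rE^θ − rwH^r) − r²H^z] = 0. -/
theorem stmt_19 (A C : ℝ) (hC : C ≠ 0)
    (ρ r u w z Hz Eθ : ℝ → ℝ → ℝ)
    (hρ : ContDiff ℝ (⊤ : ℕ∞) (Function.uncurry ρ))
    (hr : ContDiff ℝ (⊤ : ℕ∞) (Function.uncurry r))
    (hu : ContDiff ℝ (⊤ : ℕ∞) (Function.uncurry u))
    (hw : ContDiff ℝ (⊤ : ℕ∞) (Function.uncurry w))
    (hz : ContDiff ℝ (⊤ : ℕ∞) (Function.uncurry z))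
    (hHz : ContDiff ℝ (⊤ : ℕ∞) (Function.uncurry Hz))
    (hEθ : ContDiff ℝ (⊤ : ℕ∞) (Function.uncurry Eθ))
    (hρpos : ∀ t s, 0 < ρ t s) (hrpos : ∀ t s, 0 < r t s)
    (hcont : ∀ t s, pdt ρ t s = -(ρ t s)^2 * pds (fun t s => r t s * u t s) t s)
    (hrt : ∀ t s, pdt r t s = u t s)
    (hrs : ∀ t s, pds r t s = 1 / (r t s * ρ t s))
    (hzt : ∀ t s, pdt z t s = w t s)
    (hflux : ∀ t s, pdt (fun t s => Hz t s / ρ t s) t s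
      = pds (fun t s => r t s * w t s * (A / r t s) - r t s * Eθ t s) t s)
    (hrel : ∀ t s, C * ρ t s * Eθ t s = - r t s * ρ t s * pds Hz t s) :
    ∀ t s,
      pdt (fun t s => (2 * t - C * s) * Hz t s / ρ t s
          - C * r t s * z t s * (A / r t s)) t s
      + pds (fun t s => (2 * t - C * s) *
            (r t s * Eθ t s - r t s * w t s * (A / r t s))
          - (r t s)^2 * Hz t s) t s
      = 0 := by
  intro t s
  have hρd : Differentiable ℝ (Function.uncurry ρ) := hρ.differentiable (by simp)
  -- rewrite the expressions using r ≠ 0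
  have e1 : (fun t s => (2 * t - C * s) * Hz t s / ρ t s
          - C * r t s * z t s * (A / r t s))
      = (fun t s => (2 * t - C * s) * (Hz t s / ρ t s) - C * A * z t s) := by
    funext τ σ
    have h1 : r τ σ ≠ 0 := (hrpos τ σ).ne'
    field_simp
  have e2 : (fun t s => (2 * t - C * s) *
            (r t s * Eθ t s - r t s * w t s * (A / r t s))
          - (r t s)^2 * Hz t s)
      = (fun t s => (2 * t - C * s) * (r t s * Eθ t s - A * w t s)
          - (r t s)^2 * Hz t s) := by
    funext τ σ
    have h1 : r τ σ ≠ 0 := (hrpos τ σ).ne'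
    field_simp
  have e3 : (fun t s => r t s * w t s * (A / r t s) - r t s * Eθ t s)
      = (fun t s => A * w t s - r t s * Eθ t s) := by
    funext τ σ
    have h1 : r τ σ ≠ 0 := (hrpos τ σ).ne'
    field_simp
  rw [e1, e2]
  -- smoothness of φ = Hz/ρ
  have hφ : ContDiff ℝ (⊤ : ℕ∞) (Function.uncurry (fun t s => Hz t s / ρ t s)) :=
    hHz.div hρ (fun x => (hρpos x.1 x.2).ne')
  -- time derivative of first expression
  have hd1 : HasDerivAt
      (fun τ => (2 * τ - C * s) * (Hz τ s / ρ τ s) - C * A * z τ s)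
      (2 * (Hz t s / ρ t s) + (2 * t - C * s) * pdt (fun t s => Hz t s / ρ t s) t s
        - C * A * pdt z t s) t := by
    have hlin : HasDerivAt (fun τ : ℝ => 2 * τ - C * s) 2 t := by
      simpa using ((hasDerivAt_id t).const_mul 2).sub_const (C * s)
    have hφt : HasDerivAt (fun τ => Hz τ s / ρ τ s)
        (pdt (fun t s => Hz t s / ρ t s) t s) t := Dt' _ hφ t s
    have hzt' : HasDerivAt (fun τ => z τ s) (pdt z t s) t := Dt' z hz t s
    have := (hlin.mul hφt).sub (hzt'.const_mul (C * A))
    exact this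
  have E1 : pdt (fun t s => (2 * t - C * s) * (Hz t s / ρ t s) - C * A * z t s) t s
      = 2 * (Hz t s / ρ t s) + (2 * t - C * s) * pdt (fun t s => Hz t s / ρ t s) t s
        - C * A * pdt z t s := hd1.deriv
  -- s-derivative of second expression
  have hgs : HasDerivAt (fun x => r t x * Eθ t x - A * w t x)
      (pds r t s * Eθ t s + r t s * pds Eθ t s - A * pds w t s) s :=
    ((Ds' r hr t s).mul (Ds' Eθ hEθ t s)).sub ((Ds' w hw t s).const_mul A)
  have hd2 : HasDerivAt
      (fun x => (2 * t - C * x) * (r t x * Eθ t x - A * w t x) - (r t x)^2 * Hz t x)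
      (-C * (r t s * Eθ t s - A * w t s)
        + (2 * t - C * s) * (pds r t s * Eθ t s + r t s * pds Eθ t s - A * pds w t s)
        - (2 * r t s * pds r t s * Hz t s + (r t s)^2 * pds Hz t s)) s := by
    have hlin : HasDerivAt (fun x : ℝ => 2 * t - C * x) (-C) s := by
      exact ((hasDerivAt_const s (2*t)).sub ((hasDerivAt_id s).const_mul C)).congr_deriv (by simp)
    have hr2 : HasDerivAt (fun x => (r t x)^2 * Hz t x)
        (2 * r t s * pds r t s * Hz t s + (r t s)^2 * pds Hz t s) s := by
      have := ((Ds' r hr t s).pow 2).mul (Ds' Hz hHz t s)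
      exact this.congr_deriv (by simp)
    have := (hlin.mul hgs).sub hr2
    exact this
  have E2 : pds (fun t s => (2 * t - C * s) * (r t s * Eθ t s - A * w t s)
          - (r t s)^2 * Hz t s) t s
      = -C * (r t s * Eθ t s - A * w t s)
        + (2 * t - C * s) * (pds r t s * Eθ t s + r t s * pds Eθ t s - A * pds w t s)
        - (2 * r t s * pds r t s * Hz t s + (r t s)^2 * pds Hz t s) := hd2.deriv
  -- flux relation, rewritten
  have hd3 : HasDerivAt (fun x => A * w t x - r t x * Eθ t x)
      (A * pds w t s - (pds r t s * Eθ t s + r t s * pds Eθ t s)) s :=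
    ((Ds' w hw t s).const_mul A).sub ((Ds' r hr t s).mul (Ds' Eθ hEθ t s))
  have hflux' : pdt (fun t s => Hz t s / ρ t s) t s
      = A * pds w t s - (pds r t s * Eθ t s + r t s * pds Eθ t s) := by
    rw [hflux t s, e3]
    exact hd3.deriv
  -- conductivity relation with ρ cancelled
  have hE : C * Eθ t s = - (r t s) * pds Hz t s := by
    have h := hrel t s
    have hρne : ρ t s ≠ 0 := (hρpos t s).ne'
    exact mul_left_cancel₀ hρne (by linear_combination h)
  rw [E1, E2, hflux', hzt, hrs]
  have hρne : ρ t s ≠ 0 := (hρpos t s).ne'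
  have hrne : r t s ≠ 0 := (hrpos t s).ne'
  field_simp
  linear_combination (-(r t s)^2 * ρ t s) * hE
end
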